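/- arXiv:math/0106050 — 4 statements merged into one kernel-verified Lean document; each statement's English description precedes it below -/
import Mathlib

section
/- If A is a c̃-commutative Frobenius algebra in a monoidal category with right duality, then A is also c̃-cocommutative: c̃ ∘ Δ = Δ. -/
/-!
The Frobenius form `m ≫ ε` and the copairing `η ≫ Δ` exhibit `A` as its own dual, so a morphism
`A ⟶ A ⊗ A` is determined by its transpose `A ⊗ A ⟶ A`, and the transpose of `Δ` is `m`.
The hexagon relations and `c̃ ≫ m = m` show that the transpose of `Δ ≫ c̃` is `m` precomposed
with an endomorphism `ω` of the second factor; transposing back, `Δ ≫ c̃ = Δ ≫ (A ◁ ω')` with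
`ω'` the mate of `ω`. Commutativity also carries the counit across `c̃`, so the left counit law
for `Δ ≫ c̃` forces `ω' = 𝟙`.
-/

open CategoryTheory MonoidalCategory

section Duality

variable {C : Type*} [Category C] [MonoidalCategory C]

theorem tensorRightHomEquiv_symm_comp_whiskerLeft_rightAdjointMate {X Y Y₁ Z : C}
    [HasRightDual Y] [HasRightDual Y₁] (f : X ⟶ Z ⊗ Y₁ᘁ) (g : Y ⟶ Y₁) :
    (tensorRightHomEquiv X Y Yᘁ Z).symm (f ≫ Z ◁ gᘁ) =
      X ◁ g ≫ (tensorRightHomEquiv X Y₁ Y₁ᘁ Z).symm f := by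
  calc _ = f ▷ Y ≫ (α_ _ _ _).hom ≫ Z ◁ (gᘁ ▷ Y ≫ ε_ Y Yᘁ) ≫ (ρ_ Z).hom := by
        simp [tensorRightHomEquiv]
    _ = f ▷ Y ≫ (α_ _ _ _).hom ≫ Z ◁ (Y₁ᘁ ◁ g ≫ ε_ Y₁ Y₁ᘁ) ≫ (ρ_ Z).hom := by
        rw [rightAdjointMate_comp_evaluation]
    _ = _ := by simp [tensorRightHomEquiv, whisker_exchange_assoc]

end Duality

section Frobenius

variable {C : Type*} [Category C] [MonoidalCategory C] {A : C}
  (m : A ⊗ A ⟶ A) (η : 𝟙_ C ⟶ A) (Δ : A ⟶ A ⊗ A) (ε : A ⟶ 𝟙_ C)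

@[reducible]
def frobeniusExactPairing
    (one_mul : (η ▷ A) ≫ m = (λ_ A).hom) (mul_one : (A ◁ η) ≫ m = (ρ_ A).hom)
    (counit_left : Δ ≫ (ε ▷ A) = (λ_ A).inv) (counit_right : Δ ≫ (A ◁ ε) = (ρ_ A).inv)
    (frob₁ : (Δ ▷ A) ≫ (α_ A A A).hom ≫ (A ◁ m) = m ≫ Δ)
    (frob₂ : (A ◁ Δ) ≫ (α_ A A A).inv ≫ (m ▷ A) = m ≫ Δ) : ExactPairing A A where
  coevaluation' := η ≫ Δ
  evaluation' := m ≫ ε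
  coevaluation_evaluation' := by
    simp only [MonoidalCategory.whiskerLeft_comp, comp_whiskerRight, Category.assoc]
    rw [reassoc_of% frob₂, reassoc_of% mul_one, counit_left]
  evaluation_coevaluation' := by
    simp only [MonoidalCategory.whiskerLeft_comp, comp_whiskerRight, Category.assoc]
    rw [reassoc_of% frob₁, reassoc_of% one_mul, counit_right]

theorem comul_whiskerRight_comp_pairing (counit_right : Δ ≫ (A ◁ ε) = (ρ_ A).inv)
    (frob₁ : (Δ ▷ A) ≫ (α_ A A A).hom ≫ (A ◁ m) = m ≫ Δ) :
    (Δ ▷ A) ≫ (α_ A A A).hom ≫ (A ◁ (m ≫ ε)) ≫ (ρ_ A).hom = m := by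
  rw [MonoidalCategory.whiskerLeft_comp, Category.assoc, reassoc_of% frob₁,
    reassoc_of% counit_right]
  simp

theorem coevaluation_whiskerRight_comp_mul (one_mul : (η ▷ A) ≫ m = (λ_ A).hom)
    (frob₁ : (Δ ▷ A) ≫ (α_ A A A).hom ≫ (A ◁ m) = m ≫ Δ) :
    (λ_ A).inv ≫ ((η ≫ Δ) ▷ A) ≫ (α_ A A A).hom ≫ (A ◁ m) = Δ := by
  rw [comp_whiskerRight, Category.assoc, frob₁, reassoc_of% one_mul]
  simp

theorem exists_eq_comul_whiskerLeft_of_pairing_eq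
    (one_mul : (η ▷ A) ≫ m = (λ_ A).hom) (mul_one : (A ◁ η) ≫ m = (ρ_ A).hom)
    (counit_left : Δ ≫ (ε ▷ A) = (λ_ A).inv) (counit_right : Δ ≫ (A ◁ ε) = (ρ_ A).inv)
    (frob₁ : (Δ ▷ A) ≫ (α_ A A A).hom ≫ (A ◁ m) = m ≫ Δ)
    (frob₂ : (A ◁ Δ) ≫ (α_ A A A).inv ≫ (m ▷ A) = m ≫ Δ)
    (f : A ⟶ A ⊗ A) (ω : A ⟶ A)
    (hf : (f ▷ A) ≫ (α_ A A A).hom ≫ (A ◁ (m ≫ ε)) ≫ (ρ_ A).hom = (A ◁ ω) ≫ m) :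
    ∃ ω' : A ⟶ A, f = Δ ≫ (A ◁ ω') := by
  let _ := frobeniusExactPairing m η Δ ε one_mul mul_one counit_left counit_right frob₁ frob₂
  let _ : HasRightDual A := ⟨A⟩
  refine ⟨ωᘁ, (tensorRightHomEquiv A A Aᘁ A).symm.injective ?_⟩
  refine Eq.trans ?_
    (tensorRightHomEquiv_symm_comp_whiskerLeft_rightAdjointMate (X := A) (Z := A) Δ ω).symm
  change _ = A ◁ ω ≫ (Δ ▷ A) ≫ (α_ A A A).hom ≫ (A ◁ (m ≫ ε)) ≫ (ρ_ A).hom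
  rw [comul_whiskerRight_comp_pairing m Δ ε counit_right frob₁]
  exact hf

end Frobenius

section Swap

variable {C : Type*} [Category C] [MonoidalCategory C] {A : C}
  (m : A ⊗ A ⟶ A) (c : A ⊗ A ⟶ A ⊗ A)

theorem swap_comp_whiskerLeft_comp_mul (hfunc : ∀ f g : A ⟶ A, (f ⊗ₘ g) ≫ c = c ≫ (g ⊗ₘ f))
    (hcomm : c ≫ m = m) (f : A ⟶ A) : c ≫ (A ◁ f) ≫ m = (f ▷ A) ≫ m := by
  have := hfunc f (𝟙 A)
  rw [tensorHom_id, id_tensorHom] at this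
  rw [← reassoc_of% this, hcomm]

theorem swap_comp_whiskerRight_comp_mul (hfunc : ∀ f g : A ⟶ A, (f ⊗ₘ g) ≫ c = c ≫ (g ⊗ₘ f))
    (hcomm : c ≫ m = m) (f : A ⟶ A) : c ≫ (f ▷ A) ≫ m = (A ◁ f) ≫ m := by
  have := hfunc (𝟙 A) f
  rw [tensorHom_id, id_tensorHom] at this
  rw [← reassoc_of% this, hcomm]

theorem inv_swap_hexagon [IsIso c]
    (hc₁ : (c ▷ A) ≫ (α_ A A A).hom ≫ (A ◁ c) ≫ (α_ A A A).inv ≫ (m ▷ A)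
            = (α_ A A A).hom ≫ (A ◁ m) ≫ c) :
    (A ◁ inv c) ≫ (α_ A A A).inv ≫ (inv c ▷ A) ≫ (α_ A A A).hom ≫ (A ◁ m)
      = (α_ A A A).inv ≫ (m ▷ A) ≫ inv c := by
  rw [← cancel_epi (A ◁ c), ← cancel_mono c]
  simp only [Category.assoc, IsIso.inv_hom_id, Category.comp_id, ← hc₁]
  simp

variable (η : 𝟙_ C ⟶ A) (ε : A ⟶ 𝟙_ C)

theorem swap_comp_whiskerLeft_counit (one_mul : (η ▷ A) ≫ m = (λ_ A).hom)
    (mul_one : (A ◁ η) ≫ m = (ρ_ A).hom)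
    (hfunc : ∀ f g : A ⟶ A, (f ⊗ₘ g) ≫ c = c ≫ (g ⊗ₘ f)) (hcomm : c ≫ m = m) :
    c ≫ (A ◁ ε) ≫ (ρ_ A).hom = (ε ▷ A) ≫ (λ_ A).hom := by
  simpa [← one_mul, ← mul_one] using swap_comp_whiskerLeft_comp_mul m c hfunc hcomm (ε ≫ η)

theorem swap_comp_whiskerRight_counit (one_mul : (η ▷ A) ≫ m = (λ_ A).hom)
    (mul_one : (A ◁ η) ≫ m = (ρ_ A).hom)
    (hfunc : ∀ f g : A ⟶ A, (f ⊗ₘ g) ≫ c = c ≫ (g ⊗ₘ f)) (hcomm : c ≫ m = m) :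
    c ≫ (ε ▷ A) ≫ (λ_ A).hom = (A ◁ ε) ≫ (ρ_ A).hom := by
  simpa [← one_mul, ← mul_one] using swap_comp_whiskerRight_comp_mul m c hfunc hcomm (ε ≫ η)

end Swap

section Transpose

variable {C : Type*} [Category C] [MonoidalCategory C] {A : C}

/-- In elements, `(u ⊗ v) ⊗ y ↦ p (u ⊗ d(v ⊗ y)₁) • d(v ⊗ y)₂`. -/
def pairThrough (p : A ⊗ A ⟶ 𝟙_ C) (d : A ⊗ A ⟶ A ⊗ A) : (A ⊗ A) ⊗ A ⟶ A :=
  (α_ A A A).hom ≫ (A ◁ d) ≫ (α_ A A A).inv ≫ (p ▷ A) ≫ (λ_ A).hom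

theorem whiskerRight_comp_pairThrough_of_hexagon (m : A ⊗ A ⟶ A) (p : A ⊗ A ⟶ 𝟙_ C)
    (d : A ⊗ A ⟶ A ⊗ A)
    (hd : (A ◁ d) ≫ (α_ A A A).inv ≫ (d ▷ A) ≫ (α_ A A A).hom ≫ (A ◁ m)
      = (α_ A A A).inv ≫ (m ▷ A) ≫ d)
    (e : 𝟙_ C ⟶ A ⊗ A) :
    (((λ_ A).inv ≫ (e ▷ A) ≫ (α_ A A A).hom ≫ (A ◁ m)) ▷ A) ≫ pairThrough p d
      = d ≫ (((λ_ A).inv ≫ (e ▷ A) ≫ pairThrough p d) ▷ A) ≫ m := by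
  unfold pairThrough
  -- the hexagon moves `m` past `d`; then `m` and `p` act on disjoint factors and commute
  calc _ = 𝟙 _ ⊗≫ e ▷ (A ⊗ A) ⊗≫ A ◁ ((α_ A A A).inv ≫ (m ▷ A) ≫ d) ⊗≫ p ▷ A ⊗≫ 𝟙 _ := by
        monoidal
    _ = 𝟙 _ ⊗≫ (e ▷ (A ⊗ A) ≫ (A ⊗ A) ◁ d) ⊗≫ A ◁ d ▷ A ⊗≫
          ((A ⊗ A) ◁ m ≫ p ▷ A) ⊗≫ 𝟙 _ := by
        rw [← hd]; monoidal
    _ = 𝟙 _ ⊗≫ (𝟙_ C ◁ d ≫ e ▷ (A ⊗ A)) ⊗≫ A ◁ d ▷ A ⊗≫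
          (p ▷ (A ⊗ A) ≫ 𝟙_ C ◁ m) ⊗≫ 𝟙 _ := by
        rw [whisker_exchange (f := p), ← whisker_exchange (f := e)]
    _ = _ := by monoidal

theorem exists_comul_swap_pairing_eq_whiskerLeft_mul
    (m : A ⊗ A ⟶ A) (η : 𝟙_ C ⟶ A) (Δ : A ⟶ A ⊗ A) (ε : A ⟶ 𝟙_ C)
    (one_mul : (η ▷ A) ≫ m = (λ_ A).hom) (mul_one : (A ◁ η) ≫ m = (ρ_ A).hom)
    (frob₁ : (Δ ▷ A) ≫ (α_ A A A).hom ≫ (A ◁ m) = m ≫ Δ)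
    (c : A ⊗ A ⟶ A ⊗ A) [IsIso c]
    (hc₁ : (c ▷ A) ≫ (α_ A A A).hom ≫ (A ◁ c) ≫ (α_ A A A).inv ≫ (m ▷ A)
            = (α_ A A A).hom ≫ (A ◁ m) ≫ c)
    (hc₂ : (A ◁ c) ≫ (α_ A A A).inv ≫ (c ▷ A) ≫ (α_ A A A).hom ≫ (A ◁ m)
            = (α_ A A A).inv ≫ (m ▷ A) ≫ c)
    (hfunc : ∀ f g : A ⟶ A, (f ⊗ₘ g) ≫ c = c ≫ (g ⊗ₘ f)) (hcomm : c ≫ m = m) :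
    ∃ ω : A ⟶ A,
      ((Δ ≫ c) ▷ A) ≫ (α_ A A A).hom ≫ (A ◁ (m ≫ ε)) ≫ (ρ_ A).hom = (A ◁ ω) ≫ m := by
  refine ⟨(λ_ A).inv ≫ ((η ≫ Δ) ▷ A) ≫ pairThrough (m ≫ ε) (inv c), ?_⟩
  calc _ = (Δ ▷ A) ≫ (α_ A A A).hom ≫ (A ◁ inv c) ≫ (α_ A A A).inv ≫ (m ▷ A)
          ≫ c ≫ (A ◁ ε) ≫ (ρ_ A).hom := by
        rw [← reassoc_of% hc₂]; simp
    _ = (Δ ▷ A) ≫ pairThrough (m ≫ ε) (inv c) := by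
        rw [swap_comp_whiskerLeft_counit m c η ε one_mul mul_one hfunc hcomm]
        simp [pairThrough]
    _ = (((λ_ A).inv ≫ ((η ≫ Δ) ▷ A) ≫ (α_ A A A).hom ≫ (A ◁ m)) ▷ A)
          ≫ pairThrough (m ≫ ε) (inv c) := by
        rw [coevaluation_whiskerRight_comp_mul m η Δ one_mul frob₁]
    _ = inv c ≫ (((λ_ A).inv ≫ ((η ≫ Δ) ▷ A) ≫ pairThrough (m ≫ ε) (inv c)) ▷ A) ≫ m :=
        whiskerRight_comp_pairThrough_of_hexagon m _ _ (inv_swap_hexagon m c hc₁) _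
    _ = _ := by
        rw [IsIso.inv_comp_eq, swap_comp_whiskerLeft_comp_mul m c hfunc hcomm]

end Transpose

theorem stmt5_general {C : Type*} [Category C] [MonoidalCategory C]
    (A : C)
    (m : A ⊗ A ⟶ A) (η : 𝟙_ C ⟶ A) (Δ : A ⟶ A ⊗ A) (ε : A ⟶ 𝟙_ C)
    (one_mul : (η ▷ A) ≫ m = (λ_ A).hom)
    (mul_one : (A ◁ η) ≫ m = (ρ_ A).hom)
    (counit_left : Δ ≫ (ε ▷ A) = (λ_ A).inv)
    (counit_right : Δ ≫ (A ◁ ε) = (ρ_ A).inv)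
    (frob₁ : (Δ ▷ A) ≫ (α_ A A A).hom ≫ (A ◁ m) = m ≫ Δ)
    (frob₂ : (A ◁ Δ) ≫ (α_ A A A).inv ≫ (m ▷ A) = m ≫ Δ)
    (c : A ⊗ A ⟶ A ⊗ A) [IsIso c]
    -- compatibility of `c̃` with the product
    (hc₁ : (c ▷ A) ≫ (α_ A A A).hom ≫ (A ◁ c) ≫ (α_ A A A).inv ≫ (m ▷ A)
            = (α_ A A A).hom ≫ (A ◁ m) ≫ c)
    (hc₂ : (A ◁ c) ≫ (α_ A A A).inv ≫ (c ▷ A) ≫ (α_ A A A).hom ≫ (A ◁ m)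
            = (α_ A A A).inv ≫ (m ▷ A) ≫ c)
    -- functoriality of `c̃`
    (hfunc : ∀ f g : A ⟶ A, (f ⊗ₘ g) ≫ c = c ≫ (g ⊗ₘ f))
    -- `c̃`-commutativity
    (hcomm : c ≫ m = m) :
    Δ ≫ c = Δ := by
  obtain ⟨ω, hω⟩ := exists_comul_swap_pairing_eq_whiskerLeft_mul m η Δ ε one_mul mul_one frob₁
    c hc₁ hc₂ hfunc hcomm
  obtain ⟨ω', hω'⟩ := exists_eq_comul_whiskerLeft_of_pairing_eq m η Δ ε one_mul mul_one
    counit_left counit_right frob₁ frob₂ (Δ ≫ c) ω hω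
  have hω'_id : ω' = 𝟙 A :=
    calc ω' = Δ ≫ (A ◁ ω') ≫ (ε ▷ A) ≫ (λ_ A).hom := by
          rw [whisker_exchange_assoc, reassoc_of% counit_left]; simp
      _ = Δ ≫ c ≫ (ε ▷ A) ≫ (λ_ A).hom := by rw [reassoc_of% hω']
      _ = 𝟙 A := by
          rw [swap_comp_whiskerRight_counit m c η ε one_mul mul_one hfunc hcomm,
            reassoc_of% counit_right]
          simp
  rw [hω', hω'_id, MonoidalCategory.whiskerLeft_id, Category.comp_id]

/-- A `c̃`-commutative Frobenius algebra in a monoidal category with right duality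
is also `c̃`-cocommutative: `c̃ ∘ Δ = Δ`. -/
theorem stmt5 {C : Type*} [Category C] [MonoidalCategory C]
    (A Av : C) (b : 𝟙_ C ⟶ A ⊗ Av) (d : Av ⊗ A ⟶ 𝟙_ C)
    -- zig-zag identities of the right duality
    (zig : (λ_ A).inv ≫ (b ▷ A) ≫ (α_ A Av A).hom ≫ (A ◁ d) ≫ (ρ_ A).hom = 𝟙 A)
    (zag : (ρ_ Av).inv ≫ (Av ◁ b) ≫ (α_ Av A Av).inv ≫ (d ▷ Av) ≫ (λ_ Av).hom = 𝟙 Av)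
    (m : A ⊗ A ⟶ A) (η : 𝟙_ C ⟶ A) (Δ : A ⟶ A ⊗ A) (ε : A ⟶ 𝟙_ C)
    (mul_assoc : (m ▷ A) ≫ m = (α_ A A A).hom ≫ (A ◁ m) ≫ m)
    (one_mul : (η ▷ A) ≫ m = (λ_ A).hom)
    (mul_one : (A ◁ η) ≫ m = (ρ_ A).hom)
    (coassoc : Δ ≫ (Δ ▷ A) ≫ (α_ A A A).hom = Δ ≫ (A ◁ Δ))
    (counit_left : Δ ≫ (ε ▷ A) = (λ_ A).inv)
    (counit_right : Δ ≫ (A ◁ ε) = (ρ_ A).inv)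
    (frob₁ : (Δ ▷ A) ≫ (α_ A A A).hom ≫ (A ◁ m) = m ≫ Δ)
    (frob₂ : (A ◁ Δ) ≫ (α_ A A A).inv ≫ (m ▷ A) = m ≫ Δ)
    (c : A ⊗ A ⟶ A ⊗ A) [IsIso c]
    -- compatibility of `c̃` with the product
    (hc₁ : (c ▷ A) ≫ (α_ A A A).hom ≫ (A ◁ c) ≫ (α_ A A A).inv ≫ (m ▷ A)
            = (α_ A A A).hom ≫ (A ◁ m) ≫ c)
    (hc₂ : (A ◁ c) ≫ (α_ A A A).inv ≫ (c ▷ A) ≫ (α_ A A A).hom ≫ (A ◁ m)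
            = (α_ A A A).inv ≫ (m ▷ A) ≫ c)
    -- compatibility of `c̃` with the unit
    (hcη₁ : (ρ_ A).inv ≫ (A ◁ η) ≫ c = (λ_ A).inv ≫ (η ▷ A))
    (hcη₂ : (λ_ A).inv ≫ (η ▷ A) ≫ c = (ρ_ A).inv ≫ (A ◁ η))
    -- functoriality of `c̃`
    (hfunc : ∀ f g : A ⟶ A, (f ⊗ₘ g) ≫ c = c ≫ (g ⊗ₘ f))
    -- `c̃`-commutativity
    (hcomm : c ≫ m = m) :
    Δ ≫ c = Δ :=
  stmt5_general A m η Δ ε one_mul mul_one counit_left counit_right frob₁ frob₂ c hc₁ hc₂ hfunc hcomm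
end

section
/- Let A be a special Frobenius algebra in a monoidal category. For A-modules M, N, objects X, Y, morphisms f ∈ Hom(M, X) and g ∈ Hom(X, N) such that g ∘ f ∈ Hom_A(M, N), one has E(g) ∘ Ẽ⁻¹(f) = β_A · (g ∘ f), where E(g) = ρ_N ∘ (id_A ⊗ g) and Ẽ⁻¹(f) = (id_A ⊗ (f ∘ ρ_M)) ∘ ((Δ ∘ η) ⊗ id_M). -/
open CategoryTheory MonoidalCategory

/-- Scalar action of the ground ring `End(𝟙)` on morphisms. -/
def usmul {C : Type*} [Category C] [MonoidalCategory C] {X Y : C}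
    (β : 𝟙_ C ⟶ 𝟙_ C) (f : X ⟶ Y) : X ⟶ Y :=
  (λ_ X).inv ≫ (β ▷ X) ≫ (λ_ X).hom ≫ f

/-- For a special Frobenius algebra `A`, modules `M, N` and morphisms
`f : M ⟶ X`, `g : X ⟶ N` with `g ∘ f` a module morphism, one has
`E(g) ∘ Ẽ⁻¹(f) = β_A · (g ∘ f)`. -/
theorem stmt13 {C : Type*} [Category C] [MonoidalCategory C]
    (A : C) (m : A ⊗ A ⟶ A) (η : 𝟙_ C ⟶ A) (Δ : A ⟶ A ⊗ A) (ε : A ⟶ 𝟙_ C)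
    (mul_assoc : (m ▷ A) ≫ m = (α_ A A A).hom ≫ (A ◁ m) ≫ m)
    (one_mul : (η ▷ A) ≫ m = (λ_ A).hom)
    (mul_one : (A ◁ η) ≫ m = (ρ_ A).hom)
    (coassoc : Δ ≫ (Δ ▷ A) ≫ (α_ A A A).hom = Δ ≫ (A ◁ Δ))
    (counit_left : Δ ≫ (ε ▷ A) = (λ_ A).inv)
    (counit_right : Δ ≫ (A ◁ ε) = (ρ_ A).inv)
    (frob₁ : (Δ ▷ A) ≫ (α_ A A A).hom ≫ (A ◁ m) = m ≫ Δ)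
    (frob₂ : (A ◁ Δ) ≫ (α_ A A A).inv ≫ (m ▷ A) = m ≫ Δ)
    (βA : 𝟙_ C ⟶ 𝟙_ C) (special : Δ ≫ m = usmul βA (𝟙 A))
    (M N : C) (ρM : A ⊗ M ⟶ M) (ρN : A ⊗ N ⟶ N)
    (actM_one : (η ▷ M) ≫ ρM = (λ_ M).hom)
    (actM_mul : (m ▷ M) ≫ ρM = (α_ A A M).hom ≫ (A ◁ ρM) ≫ ρM)
    (actN_one : (η ▷ N) ≫ ρN = (λ_ N).hom)
    (actN_mul : (m ▷ N) ≫ ρN = (α_ A A N).hom ≫ (A ◁ ρN) ≫ ρN)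
    (X : C) (f : M ⟶ X) (g : X ⟶ N)
    (hmod : ρM ≫ (f ≫ g) = (A ◁ (f ≫ g)) ≫ ρN) :
    (λ_ M).inv ≫ ((η ≫ Δ) ▷ M) ≫ (α_ A A M).hom ≫ (A ◁ ρM) ≫ (A ◁ f) ≫
      (A ◁ g) ≫ ρN = usmul βA (f ≫ g) := by
  have step1 : (A ◁ ρM) ≫ (A ◁ f) ≫ (A ◁ g) ≫ ρN
      = (A ◁ (A ◁ (f ≫ g))) ≫ (A ◁ ρN) ≫ ρN := by
    rw [← Category.assoc (A ◁ f), ← MonoidalCategory.whiskerLeft_comp,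
      ← Category.assoc (A ◁ ρM), ← MonoidalCategory.whiskerLeft_comp,
      hmod, MonoidalCategory.whiskerLeft_comp,
      Category.assoc, MonoidalCategory.whiskerLeft_comp]
  have step2 : (A ◁ ρN) ≫ ρN = (α_ A A N).inv ≫ (m ▷ N) ≫ ρN := by
    rw [actN_mul, ← Category.assoc, Iso.inv_hom_id, Category.id_comp]
  rw [step1, step2]
  have step3 : (A ◁ (A ◁ (f ≫ g))) ≫ (α_ A A N).inv
      = (α_ A A M).inv ≫ ((A ⊗ A) ◁ (f ≫ g)) := by
    simp
  rw [← Category.assoc (A ◁ (A ◁ (f ≫ g))), step3]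
  have step4 : ((A ⊗ A) ◁ (f ≫ g)) ≫ (m ▷ N) = (m ▷ M) ≫ (A ◁ (f ≫ g)) := by
    rw [← whisker_exchange]
  slice_lhs 3 4 => rw [Iso.hom_inv_id]
  rw [Category.id_comp]
  slice_lhs 3 4 => rw [step4]
  slice_lhs 2 3 => rw [← comp_whiskerRight]
  have hη : η ≫ Δ ≫ m = (λ_ (𝟙_ C)).inv ≫ (βA ▷ 𝟙_ C) ≫ (λ_ (𝟙_ C)).hom ≫ η := by
    rw [special]
    simp only [usmul, Category.comp_id]
    rw [← Category.assoc η, leftUnitor_inv_naturality]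
    slice_lhs 2 3 => rw [whisker_exchange]
    simp
  rw [Category.assoc η Δ m, hη]
  have step5 : (η ▷ M) ≫ (A ◁ (f ≫ g)) ≫ ρN = (𝟙_ C ◁ (f ≫ g)) ≫ (λ_ N).hom := by
    rw [← Category.assoc, ← whisker_exchange, Category.assoc, actN_one]
  simp only [comp_whiskerRight, Category.assoc]
  rw [step5]
  simp [usmul]
end

section
/- Let A be a Frobenius algebra in a monoidal category. Every epimorphism in the category of left A-modules, viewed as a morphism of the underlying category C, is an epimorphism in C. -/
open CategoryTheory MonoidalCategory

/-- For a Frobenius algebra `A`, every epimorphism in the category of left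
`A`-modules is an epimorphism of the underlying category. -/
theorem stmt15 {C : Type*} [Category C] [MonoidalCategory C]
    (A : C) (m : A ⊗ A ⟶ A) (η : 𝟙_ C ⟶ A) (Δ : A ⟶ A ⊗ A) (ε : A ⟶ 𝟙_ C)
    (mul_assoc : (m ▷ A) ≫ m = (α_ A A A).hom ≫ (A ◁ m) ≫ m)
    (one_mul : (η ▷ A) ≫ m = (λ_ A).hom)
    (mul_one : (A ◁ η) ≫ m = (ρ_ A).hom)
    (coassoc : Δ ≫ (Δ ▷ A) ≫ (α_ A A A).hom = Δ ≫ (A ◁ Δ))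
    (counit_left : Δ ≫ (ε ▷ A) = (λ_ A).inv)
    (counit_right : Δ ≫ (A ◁ ε) = (ρ_ A).inv)
    (frob₁ : (Δ ▷ A) ≫ (α_ A A A).hom ≫ (A ◁ m) = m ≫ Δ)
    (frob₂ : (A ◁ Δ) ≫ (α_ A A A).inv ≫ (m ▷ A) = m ≫ Δ)
    (M N : C) (ρM : A ⊗ M ⟶ M) (ρN : A ⊗ N ⟶ N)
    (actM_one : (η ▷ M) ≫ ρM = (λ_ M).hom)
    (actM_mul : (m ▷ M) ≫ ρM = (α_ A A M).hom ≫ (A ◁ ρM) ≫ ρM)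
    (actN_one : (η ▷ N) ≫ ρN = (λ_ N).hom)
    (actN_mul : (m ▷ N) ≫ ρN = (α_ A A N).hom ≫ (A ◁ ρN) ≫ ρN)
    (f : M ⟶ N) (hf : ρM ≫ f = (A ◁ f) ≫ ρN)
    -- `f` is an epimorphism in the category of left `A`-modules
    (hepi : ∀ (P : C) (ρP : A ⊗ P ⟶ P),
      (η ▷ P) ≫ ρP = (λ_ P).hom →
      (m ▷ P) ≫ ρP = (α_ A A P).hom ≫ (A ◁ ρP) ≫ ρP →
      ∀ g h : N ⟶ P, ρN ≫ g = (A ◁ g) ≫ ρP → ρN ≫ h = (A ◁ h) ≫ ρP →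
        f ≫ g = f ≫ h → g = h) :
    Epi f := by
  -- the "comultiplication of the unit" for the Frobenius algebra
  set e : 𝟙_ C ⟶ A ⊗ A := η ≫ Δ with he_def
  -- two expressions for Δ coming from the Frobenius conditions
  have hΔ₁ : (λ_ A).inv ≫ (e ▷ A) ≫ (α_ A A A).hom ≫ (A ◁ m) = Δ := by
    rw [he_def, comp_whiskerRight, Category.assoc, frob₁]
    simp [reassoc_of% one_mul]
  have hΔ₂ : (ρ_ A).inv ≫ (A ◁ e) ≫ (α_ A A A).inv ≫ (m ▷ A) = Δ := by
    rw [he_def, MonoidalCategory.whiskerLeft_comp, Category.assoc, frob₂]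
    simp [reassoc_of% mul_one]
  have he : e ≫ (ε ▷ A) ≫ (λ_ A).hom = η := by
    rw [he_def, Category.assoc, reassoc_of% counit_left]
    simp
  -- the coactions
  set δN : N ⟶ A ⊗ N := (λ_ N).inv ≫ (e ▷ N) ≫ (α_ A A N).hom ≫ (A ◁ ρN) with hδN
  set δM : M ⟶ A ⊗ M := (λ_ M).inv ≫ (e ▷ M) ≫ (α_ A A M).hom ≫ (A ◁ ρM) with hδM
  -- KL1 : the coaction intertwines the action with the free action (first form)
  have KL1 : ρN ≫ δN = (Δ ▷ N) ≫ (α_ A A N).hom ≫ (A ◁ ρN) := by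
    have act_mul' : (A ◁ ρN) ≫ ρN = (α_ A A N).inv ≫ (m ▷ N) ≫ ρN := by
      rw [← cancel_epi (α_ A A N).hom, ← actN_mul]; simp
    rw [hδN]
    calc ρN ≫ (λ_ N).inv ≫ (e ▷ N) ≫ (α_ A A N).hom ≫ (A ◁ ρN)
        = (λ_ (A ⊗ N)).inv ≫ ((𝟙_ C ◁ ρN) ≫ (e ▷ N)) ≫ (α_ A A N).hom ≫ (A ◁ ρN) := by
          monoidal
      _ = (λ_ (A ⊗ N)).inv ≫ (e ▷ (A ⊗ N)) ≫ ((A ⊗ A) ◁ ρN) ≫ (α_ A A N).hom ≫ (A ◁ ρN) := by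
          rw [whisker_exchange]; simp
      _ = (λ_ (A ⊗ N)).inv ≫ (e ▷ (A ⊗ N)) ≫ (α_ A A (A ⊗ N)).hom ≫ (A ◁ ((A ◁ ρN) ≫ ρN)) := by
          monoidal
      _ = (λ_ (A ⊗ N)).inv ≫ (e ▷ (A ⊗ N)) ≫ (α_ A A (A ⊗ N)).hom ≫
            (A ◁ ((α_ A A N).inv ≫ (m ▷ N) ≫ ρN)) := by rw [act_mul']
      _ = (((λ_ A).inv ≫ (e ▷ A) ≫ (α_ A A A).hom ≫ (A ◁ m)) ▷ N) ≫
            (α_ A A N).hom ≫ (A ◁ ρN) := by monoidal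
      _ = (Δ ▷ N) ≫ (α_ A A N).hom ≫ (A ◁ ρN) := by rw [hΔ₁]
  -- KL2 : second form
  have KL2 : (A ◁ δN) ≫ (α_ A A N).inv ≫ (m ▷ N) = (Δ ▷ N) ≫ (α_ A A N).hom ≫ (A ◁ ρN) := by
    rw [hδN]
    calc (A ◁ ((λ_ N).inv ≫ (e ▷ N) ≫ (α_ A A N).hom ≫ (A ◁ ρN))) ≫ (α_ A A N).inv ≫ (m ▷ N)
        = (A ◁ (λ_ N).inv) ≫ (A ◁ (e ▷ N)) ≫ (A ◁ (α_ A A N).hom) ≫ (α_ A A (A ⊗ N)).inv ≫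
            (((A ⊗ A) ◁ ρN) ≫ (m ▷ N)) := by monoidal
      _ = (A ◁ (λ_ N).inv) ≫ (A ◁ (e ▷ N)) ≫ (A ◁ (α_ A A N).hom) ≫ (α_ A A (A ⊗ N)).inv ≫
            (m ▷ (A ⊗ N)) ≫ (A ◁ ρN) := by rw [whisker_exchange]
      _ = (((ρ_ A).inv ≫ (A ◁ e) ≫ (α_ A A A).inv ≫ (m ▷ A)) ▷ N) ≫
            (α_ A A N).hom ≫ (A ◁ ρN) := by monoidal
      _ = (Δ ▷ N) ≫ (α_ A A N).hom ≫ (A ◁ ρN) := by rw [hΔ₂]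
  -- the coaction is natural with respect to module maps
  have hnat : f ≫ δN = δM ≫ (A ◁ f) := by
    rw [hδN, hδM]
    calc f ≫ (λ_ N).inv ≫ (e ▷ N) ≫ (α_ A A N).hom ≫ (A ◁ ρN)
        = (λ_ M).inv ≫ ((𝟙_ C ◁ f) ≫ (e ▷ N)) ≫ (α_ A A N).hom ≫ (A ◁ ρN) := by monoidal
      _ = (λ_ M).inv ≫ (e ▷ M) ≫ ((A ⊗ A) ◁ f) ≫ (α_ A A N).hom ≫ (A ◁ ρN) := by
          rw [whisker_exchange]; simp
      _ = (λ_ M).inv ≫ (e ▷ M) ≫ (α_ A A M).hom ≫ (A ◁ ((A ◁ f) ≫ ρN)) := by monoidal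
      _ = (λ_ M).inv ≫ (e ▷ M) ≫ (α_ A A M).hom ≫ (A ◁ (ρM ≫ f)) := by rw [hf]
      _ = ((λ_ M).inv ≫ (e ▷ M) ≫ (α_ A A M).hom ≫ (A ◁ ρM)) ≫ (A ◁ f) := by monoidal
  -- the coaction is split by the counit
  have hsplit : δN ≫ (ε ▷ N) ≫ (λ_ N).hom = 𝟙 N := by
    rw [hδN]
    calc ((λ_ N).inv ≫ (e ▷ N) ≫ (α_ A A N).hom ≫ (A ◁ ρN)) ≫ (ε ▷ N) ≫ (λ_ N).hom
        = (λ_ N).inv ≫ (e ▷ N) ≫ (α_ A A N).hom ≫ ((A ◁ ρN) ≫ (ε ▷ N)) ≫ (λ_ N).hom := by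
          simp
      _ = (λ_ N).inv ≫ (e ▷ N) ≫ (α_ A A N).hom ≫ (ε ▷ (A ⊗ N)) ≫ (𝟙_ C ◁ ρN) ≫
            (λ_ N).hom := by rw [whisker_exchange]; simp
      _ = (λ_ N).inv ≫ ((e ≫ (ε ▷ A) ≫ (λ_ A).hom) ▷ N) ≫ ρN := by monoidal
      _ = (λ_ N).inv ≫ (η ▷ N) ≫ ρN := by rw [he]
      _ = 𝟙 N := by rw [actN_one]; simp
  -- now the main argument
  refine ⟨fun {Z} g h w => ?_⟩
  -- the free module on Z
  have hone : (η ▷ (A ⊗ Z)) ≫ ((α_ A A Z).inv ≫ (m ▷ Z)) = (λ_ (A ⊗ Z)).hom := by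
    calc (η ▷ (A ⊗ Z)) ≫ ((α_ A A Z).inv ≫ (m ▷ Z))
        = (α_ (𝟙_ C) A Z).inv ≫ (((η ▷ A) ≫ m) ▷ Z) := by monoidal
      _ = (α_ (𝟙_ C) A Z).inv ≫ ((λ_ A).hom ▷ Z) := by rw [one_mul]
      _ = (λ_ (A ⊗ Z)).hom := by monoidal
  have hmul : (m ▷ (A ⊗ Z)) ≫ ((α_ A A Z).inv ≫ (m ▷ Z)) =
      (α_ A A (A ⊗ Z)).hom ≫ (A ◁ ((α_ A A Z).inv ≫ (m ▷ Z))) ≫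
        ((α_ A A Z).inv ≫ (m ▷ Z)) := by
    calc (m ▷ (A ⊗ Z)) ≫ ((α_ A A Z).inv ≫ (m ▷ Z))
        = (α_ (A ⊗ A) A Z).inv ≫ (((m ▷ A) ≫ m) ▷ Z) := by monoidal
      _ = (α_ (A ⊗ A) A Z).inv ≫ (((α_ A A A).hom ≫ (A ◁ m) ≫ m) ▷ Z) := by rw [mul_assoc]
      _ = (α_ A A (A ⊗ Z)).hom ≫ (A ◁ ((α_ A A Z).inv ≫ (m ▷ Z))) ≫
            ((α_ A A Z).inv ≫ (m ▷ Z)) := by monoidal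
  -- transposes of g and h are module maps to the free module
  have hmod : ∀ k : N ⟶ Z, ρN ≫ (δN ≫ (A ◁ k)) =
      (A ◁ (δN ≫ (A ◁ k))) ≫ ((α_ A A Z).inv ≫ (m ▷ Z)) := by
    intro k
    calc ρN ≫ (δN ≫ (A ◁ k)) = (ρN ≫ δN) ≫ (A ◁ k) := by simp
      _ = ((A ◁ δN) ≫ (α_ A A N).inv ≫ (m ▷ N)) ≫ (A ◁ k) := by rw [KL1, ← KL2]
      _ = (A ◁ δN) ≫ (α_ A A N).inv ≫ ((m ▷ N) ≫ (A ◁ k)) := by simp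
      _ = (A ◁ δN) ≫ (α_ A A N).inv ≫ ((A ⊗ A) ◁ k) ≫ (m ▷ Z) := by
          rw [← whisker_exchange]
      _ = (A ◁ (δN ≫ (A ◁ k))) ≫ ((α_ A A Z).inv ≫ (m ▷ Z)) := by monoidal
  -- the transposes are split by the counit
  have hret : ∀ k : N ⟶ Z, (δN ≫ (A ◁ k)) ≫ (ε ▷ Z) ≫ (λ_ Z).hom = k := by
    intro k
    calc (δN ≫ (A ◁ k)) ≫ (ε ▷ Z) ≫ (λ_ Z).hom
        = δN ≫ ((A ◁ k) ≫ (ε ▷ Z)) ≫ (λ_ Z).hom := by simp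
      _ = δN ≫ (ε ▷ N) ≫ (𝟙_ C ◁ k) ≫ (λ_ Z).hom := by rw [whisker_exchange]; simp
      _ = (δN ≫ (ε ▷ N) ≫ (λ_ N).hom) ≫ k := by
          rw [leftUnitor_naturality]; simp
      _ = k := by rw [hsplit]; simp
  -- f composed with the transposes agree
  have hkey : f ≫ (δN ≫ (A ◁ g)) = f ≫ (δN ≫ (A ◁ h)) := by
    calc f ≫ δN ≫ (A ◁ g) = δM ≫ (A ◁ (f ≫ g)) := by
          rw [← Category.assoc, hnat]; simp
      _ = δM ≫ (A ◁ (f ≫ h)) := by rw [w]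
      _ = f ≫ δN ≫ (A ◁ h) := by rw [MonoidalCategory.whiskerLeft_comp, ← reassoc_of% hnat]
  have := hepi (A ⊗ Z) ((α_ A A Z).inv ≫ (m ▷ Z)) hone hmul
    (δN ≫ (A ◁ g)) (δN ≫ (A ◁ h)) (hmod g) (hmod h) hkey
  calc g = (δN ≫ (A ◁ g)) ≫ (ε ▷ Z) ≫ (λ_ Z).hom := (hret g).symm
    _ = (δN ≫ (A ◁ h)) ≫ (ε ▷ Z) ≫ (λ_ Z).hom := by rw [this]
    _ = h := hret h
end

section
/- Let C be a semisimple abelian monoidal category and A a special Frobenius algebra in C. Then the category C_A of left A-modules is semisimple: every A-module is projective (equivalently, a direct sum of simple modules). -/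
/-!
With the Casimir element `η ≫ Δ : 𝟙 ⟶ A ⊗ A`, every module `X` gets a map
`coact : X ⟶ A ⊗ X` which, by the Frobenius relations, is `A`-linear into the induced
module `A ⊗ X`. Composing it with `A ◁ t` and the action turns any morphism `t : X ⟶ Y`
of `C` into a module morphism, and since `Δ ≫ m = βA • 𝟙` this averaging multiplies
module morphisms by the invertible scalar `βA`; the scalar acts centrally on modules because
it is the action of the central element `η ≫ Δ ≫ m` of `A`. So a lift of a
module morphism along an epimorphism of modules, taken in the semisimple category `C` and
then averaged and divided by `βA`, is a module lift. That the epimorphism of modules is an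
epimorphism in `C` follows by testing against induced modules: `coact` embeds `N ⟶ Z` into
module morphisms `N ⟶ A ⊗ Z`, with retraction given by the counit.
-/

open CategoryTheory MonoidalCategory

namespace SpecialFrobenius

variable {C : Type*} [Category C] [MonoidalCategory C]

section Scalars

variable (β : 𝟙_ C ⟶ 𝟙_ C)

lemma usmul_eq_usmul_id_comp {X Y : C} (f : X ⟶ Y) : usmul β f = usmul β (𝟙 X) ≫ f := by
  simp [usmul]

lemma comp_usmul {X Y Z : C} (f : X ⟶ Y) (g : Y ⟶ Z) : f ≫ usmul β g = usmul β (f ≫ g) := by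
  simp only [usmul]
  rw [leftUnitor_inv_naturality_assoc, whisker_exchange_assoc, leftUnitor_naturality_assoc]

lemma usmul_id_comp {X Y : C} (f : X ⟶ Y) : usmul β (𝟙 X) ≫ f = f ≫ usmul β (𝟙 Y) := by
  rw [← usmul_eq_usmul_id_comp, comp_usmul, Category.comp_id]

lemma usmul_of_unit {X : C} (f : 𝟙_ C ⟶ X) : usmul β f = β ≫ f := by
  simp [usmul, unitors_inv_equal, unitors_equal]

lemma usmul_id_tensor (X Y : C) : usmul β (𝟙 (X ⊗ Y)) = usmul β (𝟙 X) ▷ Y := by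
  simp only [usmul]
  monoidal

lemma whiskerLeft_usmul_id (X Y : C) :
    X ◁ usmul β (𝟙 Y) = ((ρ_ X).inv ≫ (X ◁ β) ≫ (ρ_ X).hom) ▷ Y := by
  simp only [usmul]
  monoidal

instance [IsIso β] (X : C) : IsIso (usmul β (𝟙 X)) := by
  unfold usmul; infer_instance

end Scalars

section Modules

variable {A : C}

def IsEquivariant {X Y : C} (ρX : A ⊗ X ⟶ X) (ρY : A ⊗ Y ⟶ Y) (f : X ⟶ Y) : Prop :=
  ρX ≫ f = (A ◁ f) ≫ ρY

lemma IsEquivariant.comp {X Y Z : C} {ρX : A ⊗ X ⟶ X} {ρY : A ⊗ Y ⟶ Y} {ρZ : A ⊗ Z ⟶ Z}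
    {f : X ⟶ Y} {g : Y ⟶ Z} (hf : IsEquivariant ρX ρY f) (hg : IsEquivariant ρY ρZ g) :
    IsEquivariant ρX ρZ (f ≫ g) := by
  unfold IsEquivariant at *
  rw [reassoc_of% hf, hg, MonoidalCategory.whiskerLeft_comp_assoc]

lemma IsEquivariant.inv {X Y : C} {ρX : A ⊗ X ⟶ X} {ρY : A ⊗ Y ⟶ Y} {f : X ⟶ Y} [IsIso f]
    (hf : IsEquivariant ρX ρY f) : IsEquivariant ρY ρX (inv f) := by
  unfold IsEquivariant at *
  rw [IsIso.comp_inv_eq, Category.assoc, hf, ← MonoidalCategory.whiskerLeft_comp_assoc,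
    IsIso.inv_hom_id, MonoidalCategory.whiskerLeft_id, Category.id_comp]

lemma isEquivariant_usmul_id {β : 𝟙_ C ⟶ 𝟙_ C}
    (hβ : usmul β (𝟙 A) = (ρ_ A).inv ≫ (A ◁ β) ≫ (ρ_ A).hom) {X : C} (ρX : A ⊗ X ⟶ X) :
    IsEquivariant ρX ρX (usmul β (𝟙 X)) := by
  rw [IsEquivariant, ← usmul_id_comp, whiskerLeft_usmul_id, ← hβ, usmul_id_tensor]

variable {m : A ⊗ A ⟶ A} {η : 𝟙_ C ⟶ A} {Δ : A ⟶ A ⊗ A}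

/-- The action of `A` on the induced module `A ⊗ Z`. -/
def indAct (m : A ⊗ A ⟶ A) (Z : C) : A ⊗ (A ⊗ Z) ⟶ A ⊗ Z := (α_ A A Z).inv ≫ (m ▷ Z)

lemma indAct_one (one_mul : (η ▷ A) ≫ m = (λ_ A).hom) (Z : C) :
    (η ▷ (A ⊗ Z)) ≫ indAct m Z = (λ_ (A ⊗ Z)).hom := by
  rw [indAct, associator_inv_naturality_left_assoc, ← comp_whiskerRight, one_mul,
    leftUnitor_tensor_hom]

lemma indAct_mul (mul_assoc : (m ▷ A) ≫ m = (α_ A A A).hom ≫ (A ◁ m) ≫ m) (Z : C) :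
    (m ▷ (A ⊗ Z)) ≫ indAct m Z = (α_ A A (A ⊗ Z)).hom ≫ (A ◁ indAct m Z) ≫ indAct m Z := by
  have coh : (α_ (A ⊗ A) A Z).inv ≫ ((α_ A A A).hom ▷ Z) =
      (α_ A A (A ⊗ Z)).hom ≫ (A ◁ (α_ A A Z).inv) ≫ (α_ A (A ⊗ A) Z).inv := by
    monoidal
  rw [indAct, associator_inv_naturality_left_assoc, ← comp_whiskerRight, mul_assoc]
  simp only [MonoidalCategory.whiskerLeft_comp, comp_whiskerRight, Category.assoc]
  rw [reassoc_of% coh, associator_inv_naturality_middle_assoc]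

lemma isEquivariant_whiskerLeft (m : A ⊗ A ⟶ A) {X Y : C} (t : X ⟶ Y) :
    IsEquivariant (indAct m X) (indAct m Y) (A ◁ t) := by
  rw [IsEquivariant, indAct, indAct, Category.assoc, ← whisker_exchange,
    associator_inv_naturality_right_assoc]

lemma isEquivariant_action {X : C} {ρX : A ⊗ X ⟶ X}
    (mul_act : (m ▷ X) ≫ ρX = (α_ A A X).hom ≫ (A ◁ ρX) ≫ ρX) :
    IsEquivariant (indAct m X) ρX ρX := by
  rw [IsEquivariant, indAct, Category.assoc, mul_act, Iso.inv_hom_id_assoc]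

def coact (η : 𝟙_ C ⟶ A) (Δ : A ⟶ A ⊗ A) {X : C} (ρX : A ⊗ X ⟶ X) : X ⟶ A ⊗ X :=
  (λ_ X).inv ≫ ((η ≫ Δ) ▷ X) ≫ (α_ A A X).hom ≫ (A ◁ ρX)

lemma coact_mul (one_mul : (η ▷ A) ≫ m = (λ_ A).hom)
    (frob₁ : (Δ ▷ A) ≫ (α_ A A A).hom ≫ (A ◁ m) = m ≫ Δ) :
    coact η Δ m = Δ := by
  rw [coact, comp_whiskerRight, Category.assoc, frob₁, reassoc_of% one_mul,
    Iso.inv_hom_id_assoc]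

lemma coact_indAct (one_mul : (η ▷ A) ≫ m = (λ_ A).hom)
    (frob₁ : (Δ ▷ A) ≫ (α_ A A A).hom ≫ (A ◁ m) = m ≫ Δ) (X : C) :
    coact η Δ (indAct m X) = (Δ ▷ X) ≫ (α_ A A X).hom := by
  have h : Δ ▷ X = ((λ_ A).inv ≫ ((η ≫ Δ) ▷ A) ≫ (α_ A A A).hom ≫ (A ◁ m)) ▷ X :=
    congrArg (· ▷ X) (coact_mul one_mul frob₁).symm
  rw [coact, indAct, h]
  monoidal

lemma whiskerLeft_casimir_comp_mul (mul_one : (A ◁ η) ≫ m = (ρ_ A).hom)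
    (frob₂ : (A ◁ Δ) ≫ (α_ A A A).inv ≫ (m ▷ A) = m ≫ Δ) :
    (A ◁ (η ≫ Δ)) ≫ (α_ A A A).inv ≫ (m ▷ A) = (ρ_ A).hom ≫ Δ := by
  rw [MonoidalCategory.whiskerLeft_comp, Category.assoc, frob₂, ← Category.assoc, mul_one]

lemma whiskerLeft_casimir_comp_indAct (mul_one : (A ◁ η) ≫ m = (ρ_ A).hom)
    (frob₂ : (A ◁ Δ) ≫ (α_ A A A).inv ≫ (m ▷ A) = m ≫ Δ) (X : C) :
    (A ◁ ((λ_ X).inv ≫ ((η ≫ Δ) ▷ X) ≫ (α_ A A X).hom)) ≫ indAct m (A ⊗ X) =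
      (Δ ▷ X) ≫ (α_ A A X).hom := by
  have h : Δ ▷ X = ((ρ_ A).inv ≫ (A ◁ (η ≫ Δ)) ≫ (α_ A A A).inv ≫ (m ▷ A)) ▷ X := by
    rw [whiskerLeft_casimir_comp_mul mul_one frob₂, Iso.inv_hom_id_assoc]
  rw [indAct, h]
  monoidal

lemma coact_naturality {X Y : C} {ρX : A ⊗ X ⟶ X} {ρY : A ⊗ Y ⟶ Y} {f : X ⟶ Y}
    (hf : IsEquivariant ρX ρY f) : f ≫ coact η Δ ρY = coact η Δ ρX ≫ (A ◁ f) := by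
  simp only [coact, Category.assoc]
  rw [leftUnitor_inv_naturality_assoc, whisker_exchange_assoc,
    associator_naturality_right_assoc, ← MonoidalCategory.whiskerLeft_comp,
    ← MonoidalCategory.whiskerLeft_comp, ← hf]

lemma action_comp_coact (one_mul : (η ▷ A) ≫ m = (λ_ A).hom)
    (frob₁ : (Δ ▷ A) ≫ (α_ A A A).hom ≫ (A ◁ m) = m ≫ Δ) {X : C} {ρX : A ⊗ X ⟶ X}
    (mul_act : (m ▷ X) ≫ ρX = (α_ A A X).hom ≫ (A ◁ ρX) ≫ ρX) :
    ρX ≫ coact η Δ ρX = (Δ ▷ X) ≫ (α_ A A X).hom ≫ (A ◁ ρX) := by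
  rw [coact_naturality (isEquivariant_action mul_act), coact_indAct one_mul frob₁,
    Category.assoc]

lemma whiskerLeft_coact_comp_indAct (mul_one : (A ◁ η) ≫ m = (ρ_ A).hom)
    (frob₂ : (A ◁ Δ) ≫ (α_ A A A).inv ≫ (m ▷ A) = m ≫ Δ) {X : C} (ρX : A ⊗ X ⟶ X) :
    (A ◁ coact η Δ ρX) ≫ indAct m X = (Δ ▷ X) ≫ (α_ A A X).hom ≫ (A ◁ ρX) := by
  calc (A ◁ coact η Δ ρX) ≫ indAct m X
      = (A ◁ ((λ_ X).inv ≫ ((η ≫ Δ) ▷ X) ≫ (α_ A A X).hom)) ≫ (A ◁ A ◁ ρX) ≫ indAct m X := by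
        simp only [coact, MonoidalCategory.whiskerLeft_comp, Category.assoc]
    _ = (A ◁ ((λ_ X).inv ≫ ((η ≫ Δ) ▷ X) ≫ (α_ A A X).hom)) ≫ indAct m (A ⊗ X) ≫
          (A ◁ ρX) := by
        rw [← isEquivariant_whiskerLeft m ρX]
    _ = (Δ ▷ X) ≫ (α_ A A X).hom ≫ (A ◁ ρX) := by
        rw [reassoc_of% whiskerLeft_casimir_comp_indAct mul_one frob₂ X]

lemma isEquivariant_coact (one_mul : (η ▷ A) ≫ m = (λ_ A).hom)
    (mul_one : (A ◁ η) ≫ m = (ρ_ A).hom)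
    (frob₁ : (Δ ▷ A) ≫ (α_ A A A).hom ≫ (A ◁ m) = m ≫ Δ)
    (frob₂ : (A ◁ Δ) ≫ (α_ A A A).inv ≫ (m ▷ A) = m ≫ Δ) {X : C} {ρX : A ⊗ X ⟶ X}
    (mul_act : (m ▷ X) ≫ ρX = (α_ A A X).hom ≫ (A ◁ ρX) ≫ ρX) :
    IsEquivariant ρX (indAct m X) (coact η Δ ρX) :=
  (action_comp_coact one_mul frob₁ mul_act).trans
    (whiskerLeft_coact_comp_indAct mul_one frob₂ ρX).symm

lemma coact_comp_counit {ε : A ⟶ 𝟙_ C} (counit_left : Δ ≫ (ε ▷ A) = (λ_ A).inv)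
    {X : C} {ρX : A ⊗ X ⟶ X} (one_act : (η ▷ X) ≫ ρX = (λ_ X).hom) :
    coact η Δ ρX ≫ (ε ▷ X) ≫ (λ_ X).hom = 𝟙 X := by
  have coh : ((λ_ A).inv ▷ X) ≫ (α_ (𝟙_ C) A X).hom ≫ (λ_ (A ⊗ X)).hom = 𝟙 (A ⊗ X) := by
    monoidal
  simp only [coact, Category.assoc]
  rw [whisker_exchange_assoc, leftUnitor_naturality, ← associator_naturality_left_assoc,
    ← comp_whiskerRight_assoc, Category.assoc, counit_left, comp_whiskerRight, Category.assoc,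
    reassoc_of% coh, one_act, Iso.inv_hom_id]

lemma casimir_mul {β : 𝟙_ C ⟶ 𝟙_ C} (special : Δ ≫ m = usmul β (𝟙 A)) :
    η ≫ Δ ≫ m = β ≫ η := by
  rw [special, comp_usmul, Category.comp_id, usmul_of_unit]

lemma coact_comp_action {β : 𝟙_ C ⟶ 𝟙_ C} (special : Δ ≫ m = usmul β (𝟙 A))
    {X : C} {ρX : A ⊗ X ⟶ X} (one_act : (η ▷ X) ≫ ρX = (λ_ X).hom)
    (mul_act : (m ▷ X) ≫ ρX = (α_ A A X).hom ≫ (A ◁ ρX) ≫ ρX) :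
    coact η Δ ρX ≫ ρX = usmul β (𝟙 X) := by
  rw [coact, Category.assoc, Category.assoc, Category.assoc, ← mul_act,
    ← comp_whiskerRight_assoc, Category.assoc, casimir_mul special, comp_whiskerRight,
    Category.assoc, one_act]
  simp [usmul]

lemma usmul_id_eq_rightUnitor_conj {β : 𝟙_ C ⟶ 𝟙_ C}
    (mul_assoc : (m ▷ A) ≫ m = (α_ A A A).hom ≫ (A ◁ m) ≫ m)
    (mul_one : (A ◁ η) ≫ m = (ρ_ A).hom)
    (frob₂ : (A ◁ Δ) ≫ (α_ A A A).inv ≫ (m ▷ A) = m ≫ Δ)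
    (special : Δ ≫ m = usmul β (𝟙 A)) :
    usmul β (𝟙 A) = (ρ_ A).inv ≫ (A ◁ β) ≫ (ρ_ A).hom := by
  have mul_assoc' : (A ◁ m) ≫ m = (α_ A A A).inv ≫ (m ▷ A) ≫ m := by
    rw [mul_assoc, Iso.inv_hom_id_assoc]
  calc usmul β (𝟙 A) = (ρ_ A).inv ≫ (ρ_ A).hom ≫ Δ ≫ m := by rw [special, Iso.inv_hom_id_assoc]
    _ = (ρ_ A).inv ≫ (A ◁ (η ≫ Δ ≫ m)) ≫ m := by
      rw [← reassoc_of% whiskerLeft_casimir_comp_mul mul_one frob₂]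
      simp only [MonoidalCategory.whiskerLeft_comp, Category.assoc, mul_assoc']
    _ = (ρ_ A).inv ≫ (A ◁ β) ≫ (ρ_ A).hom := by
      rw [casimir_mul special, MonoidalCategory.whiskerLeft_comp, Category.assoc, mul_one]

def average (η : 𝟙_ C ⟶ A) (Δ : A ⟶ A ⊗ A) {X Y : C} (ρX : A ⊗ X ⟶ X) (ρY : A ⊗ Y ⟶ Y)
    (t : X ⟶ Y) : X ⟶ Y :=
  coact η Δ ρX ≫ (A ◁ t) ≫ ρY

lemma isEquivariant_average (one_mul : (η ▷ A) ≫ m = (λ_ A).hom)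
    (mul_one : (A ◁ η) ≫ m = (ρ_ A).hom)
    (frob₁ : (Δ ▷ A) ≫ (α_ A A A).hom ≫ (A ◁ m) = m ≫ Δ)
    (frob₂ : (A ◁ Δ) ≫ (α_ A A A).inv ≫ (m ▷ A) = m ≫ Δ)
    {X Y : C} {ρX : A ⊗ X ⟶ X} {ρY : A ⊗ Y ⟶ Y}
    (mul_actX : (m ▷ X) ≫ ρX = (α_ A A X).hom ≫ (A ◁ ρX) ≫ ρX)
    (mul_actY : (m ▷ Y) ≫ ρY = (α_ A A Y).hom ≫ (A ◁ ρY) ≫ ρY) (t : X ⟶ Y) :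
    IsEquivariant ρX ρY (average η Δ ρX ρY t) :=
  (isEquivariant_coact one_mul mul_one frob₁ frob₂ mul_actX).comp
    ((isEquivariant_whiskerLeft m t).comp (isEquivariant_action mul_actY))

lemma average_comp {X Y Z : C} {ρX : A ⊗ X ⟶ X} {ρY : A ⊗ Y ⟶ Y} {ρZ : A ⊗ Z ⟶ Z}
    (t : X ⟶ Y) {f : Y ⟶ Z} (hf : IsEquivariant ρY ρZ f) :
    average η Δ ρX ρY t ≫ f = average η Δ ρX ρZ (t ≫ f) := by
  rw [average, average, Category.assoc, Category.assoc, hf,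
    MonoidalCategory.whiskerLeft_comp_assoc]

lemma average_of_isEquivariant {β : 𝟙_ C ⟶ 𝟙_ C} (special : Δ ≫ m = usmul β (𝟙 A))
    {X Y : C} {ρX : A ⊗ X ⟶ X} {ρY : A ⊗ Y ⟶ Y} (one_actY : (η ▷ Y) ≫ ρY = (λ_ Y).hom)
    (mul_actY : (m ▷ Y) ≫ ρY = (α_ A A Y).hom ≫ (A ◁ ρY) ≫ ρY)
    {t : X ⟶ Y} (ht : IsEquivariant ρX ρY t) :
    average η Δ ρX ρY t = usmul β t := by
  rw [average, ← reassoc_of% coact_naturality ht, coact_comp_action special one_actY mul_actY,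
    comp_usmul, Category.comp_id]

lemma epi_of_cancel_indAct (one_mul : (η ▷ A) ≫ m = (λ_ A).hom)
    (mul_one : (A ◁ η) ≫ m = (ρ_ A).hom)
    (frob₁ : (Δ ▷ A) ≫ (α_ A A A).hom ≫ (A ◁ m) = m ≫ Δ)
    (frob₂ : (A ◁ Δ) ≫ (α_ A A A).inv ≫ (m ▷ A) = m ≫ Δ)
    {ε : A ⟶ 𝟙_ C} (counit_left : Δ ≫ (ε ▷ A) = (λ_ A).inv)
    {M N : C} {ρM : A ⊗ M ⟶ M} {ρN : A ⊗ N ⟶ N} (one_actN : (η ▷ N) ≫ ρN = (λ_ N).hom)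
    (mul_actN : (m ▷ N) ≫ ρN = (α_ A A N).hom ≫ (A ◁ ρN) ≫ ρN)
    {f : M ⟶ N} (hf : IsEquivariant ρM ρN f)
    (hepi : ∀ (Z : C) (u v : N ⟶ A ⊗ Z), IsEquivariant ρN (indAct m Z) u →
      IsEquivariant ρN (indAct m Z) v → f ≫ u = f ≫ v → u = v) :
    Epi f := by
  refine ⟨fun {Z} u v huv => ?_⟩
  have induce : ∀ w : N ⟶ Z, IsEquivariant ρN (indAct m Z) (coact η Δ ρN ≫ (A ◁ w)) :=
    fun w => (isEquivariant_coact one_mul mul_one frob₁ frob₂ mul_actN).comp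
      (isEquivariant_whiskerLeft m w)
  have restrict : ∀ w : N ⟶ Z, (coact η Δ ρN ≫ (A ◁ w)) ≫ (ε ▷ Z) ≫ (λ_ Z).hom = w := by
    intro w
    rw [Category.assoc, whisker_exchange_assoc, leftUnitor_naturality,
      reassoc_of% coact_comp_counit counit_left one_actN]
  have induce_eq : coact η Δ ρN ≫ (A ◁ u) = coact η Δ ρN ≫ (A ◁ v) := by
    refine hepi Z _ _ (induce u) (induce v) ?_
    rw [reassoc_of% coact_naturality hf, reassoc_of% coact_naturality hf,
      ← MonoidalCategory.whiskerLeft_comp, ← MonoidalCategory.whiskerLeft_comp, huv]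
  rw [← restrict u, induce_eq, restrict v]

end Modules
end SpecialFrobenius

open SpecialFrobenius in
theorem stmt18_general {C : Type*} [Category C] [MonoidalCategory C] [Abelian C]
    (hss : ∀ Z : C, Projective Z)
    (A : C) (m : A ⊗ A ⟶ A) (η : 𝟙_ C ⟶ A) (Δ : A ⟶ A ⊗ A) (ε : A ⟶ 𝟙_ C)
    (mul_assoc : (m ▷ A) ≫ m = (α_ A A A).hom ≫ (A ◁ m) ≫ m)
    (one_mul : (η ▷ A) ≫ m = (λ_ A).hom)
    (mul_one : (A ◁ η) ≫ m = (ρ_ A).hom)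
    (counit_left : Δ ≫ (ε ▷ A) = (λ_ A).inv)
    (frob₁ : (Δ ▷ A) ≫ (α_ A A A).hom ≫ (A ◁ m) = m ≫ Δ)
    (frob₂ : (A ◁ Δ) ≫ (α_ A A A).inv ≫ (m ▷ A) = m ≫ Δ)
    (βA : 𝟙_ C ⟶ 𝟙_ C) [IsIso βA]
    (special₁ : Δ ≫ m = usmul βA (𝟙 A))
    -- an arbitrary `A`-module `P`
    (P : C) (ρP : A ⊗ P ⟶ P)
    (actP_mul : (m ▷ P) ≫ ρP = (α_ A A P).hom ≫ (A ◁ ρP) ≫ ρP)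
    -- an epimorphism `f : M ⟶ N` in the category of left `A`-modules
    (M N : C) (ρM : A ⊗ M ⟶ M) (ρN : A ⊗ N ⟶ N)
    (actM_mul : (m ▷ M) ≫ ρM = (α_ A A M).hom ≫ (A ◁ ρM) ≫ ρM)
    (actN_one : (η ▷ N) ≫ ρN = (λ_ N).hom)
    (actN_mul : (m ▷ N) ≫ ρN = (α_ A A N).hom ≫ (A ◁ ρN) ≫ ρN)
    (f : M ⟶ N) (hf : ρM ≫ f = (A ◁ f) ≫ ρN)
    (hepi : ∀ (Q : C) (ρQ : A ⊗ Q ⟶ Q),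
      (η ▷ Q) ≫ ρQ = (λ_ Q).hom →
      (m ▷ Q) ≫ ρQ = (α_ A A Q).hom ≫ (A ◁ ρQ) ≫ ρQ →
      ∀ u v : N ⟶ Q, ρN ≫ u = (A ◁ u) ≫ ρQ → ρN ≫ v = (A ◁ v) ≫ ρQ →
        f ≫ u = f ≫ v → u = v)
    -- a module morphism from `P` to `N`
    (g' : P ⟶ N) (hg' : ρP ≫ g' = (A ◁ g') ≫ ρN) :
    ∃ g : P ⟶ M, ρP ≫ g = (A ◁ g) ≫ ρM ∧ g ≫ f = g' := by
  have : Epi f := epi_of_cancel_indAct one_mul mul_one frob₁ frob₂ counit_left actN_one actN_mul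
    hf fun Z => hepi (A ⊗ Z) (indAct m Z) (indAct_one one_mul Z) (indAct_mul mul_assoc Z)
  have : Projective P := hss P
  let E : P ⟶ M := average η Δ ρP ρM (Projective.factorThru g' f)
  have hE : IsEquivariant ρP ρM E :=
    isEquivariant_average one_mul mul_one frob₁ frob₂ actP_mul actM_mul _
  have hEf : E ≫ f = usmul βA g' := by
    rw [average_comp _ hf, Projective.factorThru_comp,
      average_of_isEquivariant special₁ actN_one actN_mul hg']
  have hs : IsEquivariant ρM ρM (usmul βA (𝟙 M)) :=
    isEquivariant_usmul_id (usmul_id_eq_rightUnitor_conj mul_assoc mul_one frob₂ special₁) ρM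
  refine ⟨E ≫ inv (usmul βA (𝟙 M)), hE.comp hs.inv, ?_⟩
  rw [← cancel_mono (usmul βA (𝟙 N)), Category.assoc, Category.assoc, ← usmul_id_comp,
    IsIso.inv_hom_id_assoc, hEf, usmul_eq_usmul_id_comp, usmul_id_comp]

/-- For a special Frobenius algebra `A` in a semisimple abelian monoidal
category `C`, the category of left `A`-modules is semisimple: every `A`-module
is projective, i.e. any module morphism out of it lifts along any epimorphism
of modules. -/
theorem stmt18 {C : Type*} [Category C] [MonoidalCategory C] [Abelian C]
    (hss : ∀ Z : C, Projective Z)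
    (A : C) (m : A ⊗ A ⟶ A) (η : 𝟙_ C ⟶ A) (Δ : A ⟶ A ⊗ A) (ε : A ⟶ 𝟙_ C)
    (mul_assoc : (m ▷ A) ≫ m = (α_ A A A).hom ≫ (A ◁ m) ≫ m)
    (one_mul : (η ▷ A) ≫ m = (λ_ A).hom)
    (mul_one : (A ◁ η) ≫ m = (ρ_ A).hom)
    (coassoc : Δ ≫ (Δ ▷ A) ≫ (α_ A A A).hom = Δ ≫ (A ◁ Δ))
    (counit_left : Δ ≫ (ε ▷ A) = (λ_ A).inv)
    (counit_right : Δ ≫ (A ◁ ε) = (ρ_ A).inv)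
    (frob₁ : (Δ ▷ A) ≫ (α_ A A A).hom ≫ (A ◁ m) = m ≫ Δ)
    (frob₂ : (A ◁ Δ) ≫ (α_ A A A).inv ≫ (m ▷ A) = m ≫ Δ)
    (βA βI : 𝟙_ C ⟶ 𝟙_ C) [IsIso βA] [IsIso βI]
    (special₁ : Δ ≫ m = usmul βA (𝟙 A))
    (special₂ : η ≫ ε = βI)
    -- an arbitrary `A`-module `P`
    (P : C) (ρP : A ⊗ P ⟶ P)
    (actP_one : (η ▷ P) ≫ ρP = (λ_ P).hom)
    (actP_mul : (m ▷ P) ≫ ρP = (α_ A A P).hom ≫ (A ◁ ρP) ≫ ρP)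
    -- an epimorphism `f : M ⟶ N` in the category of left `A`-modules
    (M N : C) (ρM : A ⊗ M ⟶ M) (ρN : A ⊗ N ⟶ N)
    (actM_one : (η ▷ M) ≫ ρM = (λ_ M).hom)
    (actM_mul : (m ▷ M) ≫ ρM = (α_ A A M).hom ≫ (A ◁ ρM) ≫ ρM)
    (actN_one : (η ▷ N) ≫ ρN = (λ_ N).hom)
    (actN_mul : (m ▷ N) ≫ ρN = (α_ A A N).hom ≫ (A ◁ ρN) ≫ ρN)
    (f : M ⟶ N) (hf : ρM ≫ f = (A ◁ f) ≫ ρN)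
    (hepi : ∀ (Q : C) (ρQ : A ⊗ Q ⟶ Q),
      (η ▷ Q) ≫ ρQ = (λ_ Q).hom →
      (m ▷ Q) ≫ ρQ = (α_ A A Q).hom ≫ (A ◁ ρQ) ≫ ρQ →
      ∀ u v : N ⟶ Q, ρN ≫ u = (A ◁ u) ≫ ρQ → ρN ≫ v = (A ◁ v) ≫ ρQ →
        f ≫ u = f ≫ v → u = v)
    -- a module morphism from `P` to `N`
    (g' : P ⟶ N) (hg' : ρP ≫ g' = (A ◁ g') ≫ ρN) :
    ∃ g : P ⟶ M, ρP ≫ g = (A ◁ g) ≫ ρM ∧ g ≫ f = g' :=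
  stmt18_general hss A m η Δ ε mul_assoc one_mul mul_one counit_left frob₁ frob₂ βA special₁ P ρP
    actP_mul M N ρM ρN actM_mul actN_one actN_mul f hf hepi g' hg'
end
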